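/- arXiv:2510.24809 — 2 statements merged into one kernel-verified Lean document; each statement's English description precedes it below -/
import Mathlib

section
/- Let G be a graph with minimum degree δ ≥ 1, and let u and v be non-adjacent vertices of G such that d(u) = δ, d(v) = δ, every neighbor of u has degree strictly greater than δ, and every neighbor of v has degree strictly greater than δ. Then HSO(G + uv) < HSO(G). -/
open SimpleGraph Finset Real

noncomputable def HSO {V : Type*} [Fintype V] (G : SimpleGraph V) : ℝ :=
  letI := Classical.decRel G.Adj
  ∑ e ∈ G.edgeFinset, Sym2.lift
    ⟨fun x y => Real.sqrt ((G.degree x : ℝ) ^ 2 + (G.degree y : ℝ) ^ 2) /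
      min (G.degree x : ℝ) (G.degree y : ℝ),
     fun x y => by simp [add_comm, min_comm]⟩ e

noncomputable def SO {V : Type*} [Fintype V] (G : SimpleGraph V) : ℝ :=
  letI := Classical.decRel G.Adj
  ∑ e ∈ G.edgeFinset, Sym2.lift
    ⟨fun x y => Real.sqrt ((G.degree x : ℝ) ^ 2 + (G.degree y : ℝ) ^ 2),
     fun x y => by simp [add_comm]⟩ e

noncomputable def cDSO {V : Type*} [Fintype V] (G : SimpleGraph V) : ℝ :=
  letI := Classical.decRel G.Adj
  ∑ e ∈ G.edgeFinset, Sym2.lift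
    ⟨fun x y => Real.sqrt ((G.degree x : ℝ) ^ 2 + (G.degree y : ℝ) ^ 2) /
      max (G.degree x : ℝ) (G.degree y : ℝ),
     fun x y => by simp [add_comm, max_comm]⟩ e

noncomputable def M1 {V : Type*} [Fintype V] (G : SimpleGraph V) : ℝ :=
  letI := Classical.decRel G.Adj
  ∑ e ∈ G.edgeFinset, Sym2.lift
    ⟨fun x y => (G.degree x : ℝ) + (G.degree y : ℝ),
     fun x y => by simp [add_comm]⟩ e

def IsRegularGraph {V : Type*} [Fintype V] (G : SimpleGraph V) : Prop :=
  letI := Classical.decRel G.Adj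
  ∃ k, G.IsRegularOfDegree k

def addEdge {V : Type*} (G : SimpleGraph V) (u v : V) : SimpleGraph V :=
  G ⊔ SimpleGraph.fromEdgeSet {s(u, v)}

set_option maxHeartbeats 800000 in
private theorem key_ineq (d w a b s : ℝ) (hd : 1 ≤ d) (hw : d + 1 ≤ w)
    (ha : 0 ≤ a) (hb : 0 ≤ b) (hs : 0 ≤ s)
    (ha2 : a^2 = d^2 + w^2) (hb2 : b^2 = (d+1)^2 + w^2) (hs2 : s^2 = 2) :
    (d+1)*s < 2*(d+1)*a - 2*d*b := by
  have hd0 : (0:ℝ) ≤ d := by linarith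
  have hbs : 0 ≤ b * s := mul_nonneg hb hs
  have hbs2 : (b*s)^2 = 2*((d+1)^2 + w^2) := by rw [mul_pow, hb2, hs2]; ring
  have h1 : (d+1)^2 ≤ w^2 := by nlinarith
  have iden : (4*(2*d+1)*w^2 - 2*(d+1)^2)^2 - (4*d*(d+1))^2*(2*((d+1)^2+w^2))
      = 16*(2*d+1)^2*(w^2-(d+1)^2)^2
        + ((96*d^2+96*d+16)*(d+1)^2)*(w^2-(d+1)^2)
        + (32*d+4)*(d+1)^4 := by ring
  have t1 : 0 ≤ 16*(2*d+1)^2*(w^2-(d+1)^2)^2 := by positivity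
  have t2 : 0 ≤ ((96*d^2+96*d+16)*(d+1)^2)*(w^2-(d+1)^2) :=
    mul_nonneg (mul_nonneg (by nlinarith) (sq_nonneg _)) (sub_nonneg.2 h1)
  have t3 : 0 < (32*d+4)*(d+1)^4 :=
    mul_pos (by linarith) (by positivity)
  have key : (4*d*(d+1)*(b*s))^2 < (4*(2*d+1)*w^2 - 2*(d+1)^2)^2 := by
    rw [mul_pow, hbs2]; linarith
  have hP : (0:ℝ) < 4*(2*d+1)*w^2 - 2*(d+1)^2 := by nlinarith
  have step1 : 4*d*(d+1)*(b*s) < 4*(2*d+1)*w^2 - 2*(d+1)^2 := by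
    nlinarith [mul_nonneg (mul_nonneg (by nlinarith : (0:ℝ) ≤ 4*d*(d+1)) hb) hs]
  have hQ : 0 ≤ 2*d*b + (d+1)*s := by
    have := mul_nonneg hd0 hb
    nlinarith
  have sq2 : (2*d*b + (d+1)*s)^2 < (2*(d+1)*a)^2 := by
    have h : (2*d*b + (d+1)*s)^2 = 4*d^2*b^2 + 4*d*(d+1)*(b*s) + (d+1)^2*s^2 := by ring
    rw [h, hb2, hs2, mul_pow, ha2]
    nlinarith [step1]
  nlinarith [sq2, hQ,
    mul_nonneg (mul_nonneg (by norm_num : (0:ℝ) ≤ 2) (by linarith : (0:ℝ) ≤ d+1)) ha]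

private theorem per_edge (d w : ℝ) (hd : 1 ≤ d) (hw : d + 1 ≤ w) :
    Real.sqrt ((d+1)^2 + w^2)/(d+1) + Real.sqrt 2/(2*d) < Real.sqrt (d^2 + w^2)/d := by
  have hd0 : (0:ℝ) < d := by linarith
  have key := key_ineq d w (Real.sqrt (d^2 + w^2)) (Real.sqrt ((d+1)^2 + w^2)) (Real.sqrt 2)
    hd hw (Real.sqrt_nonneg _) (Real.sqrt_nonneg _) (Real.sqrt_nonneg _)
    (Real.sq_sqrt (by positivity)) (Real.sq_sqrt (by positivity))
    (Real.sq_sqrt (by norm_num))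
  rw [div_add_div _ _ (by positivity) (by positivity), div_lt_div_iff₀ (by positivity) hd0]
  nlinarith [mul_lt_mul_of_pos_left key hd0]

private lemma HSO_eq {V : Type*} [Fintype V] (G : SimpleGraph V) [Fintype G.edgeSet]
    [∀ v, Fintype (G.neighborSet v)] :
    HSO G = ∑ e ∈ G.edgeFinset, Sym2.lift
      ⟨fun x y => Real.sqrt ((G.degree x : ℝ)^2 + (G.degree y : ℝ)^2) /
        min (G.degree x : ℝ) (G.degree y : ℝ),
       fun x y => by simp [add_comm, min_comm]⟩ e := by
  unfold HSO
  congr!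

theorem stmt3 {V : Type*} [Fintype V] (G : SimpleGraph V) [DecidableRel G.Adj]
    (δ : ℕ) (hδ : 1 ≤ δ) (hδmin : G.minDegree = δ)
    (u v : V) (huv : u ≠ v) (hnadj : ¬ G.Adj u v)
    (hu : G.degree u = δ) (hv : G.degree v = δ)
    (hNu : ∀ w, G.Adj u w → δ < G.degree w)
    (hNv : ∀ w, G.Adj v w → δ < G.degree w) :
    HSO (addEdge G u v) < HSO G := by
  classical
  -- adjacency in the new graph
  have hadj : ∀ x y, (addEdge G u v).Adj x y ↔
      G.Adj x y ∨ (x = u ∧ y = v) ∨ (x = v ∧ y = u) := by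
    intro x y
    simp only [addEdge, sup_adj, fromEdgeSet_adj, Set.mem_singleton_iff, Sym2.eq_iff]
    constructor
    · rintro (h | ⟨(⟨rfl, rfl⟩ | ⟨rfl, rfl⟩), hne⟩) <;> tauto
    · rintro (h | ⟨rfl, rfl⟩ | ⟨rfl, rfl⟩)
      · exact Or.inl h
      · exact Or.inr ⟨Or.inl ⟨rfl, rfl⟩, huv⟩
      · exact Or.inr ⟨Or.inr ⟨rfl, rfl⟩, huv.symm⟩
  -- degrees in the new graph
  have hdu : (addEdge G u v).degree u = δ + 1 := by
    rw [← card_neighborFinset_eq_degree]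
    have hN : (addEdge G u v).neighborFinset u = insert v (G.neighborFinset u) := by
      ext w
      simp only [mem_neighborFinset, hadj, mem_insert]
      constructor
      · rintro (h | ⟨-, rfl⟩ | ⟨h, -⟩)
        · exact Or.inr h
        · exact Or.inl rfl
        · exact absurd h huv
      · rintro (rfl | h) <;> tauto
    rw [hN, card_insert_of_notMem (by simp [mem_neighborFinset, hnadj]),
      card_neighborFinset_eq_degree, hu]
  have hdv : (addEdge G u v).degree v = δ + 1 := by
    rw [← card_neighborFinset_eq_degree]
    have hN : (addEdge G u v).neighborFinset v = insert u (G.neighborFinset v) := by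
      ext w
      simp only [mem_neighborFinset, hadj, mem_insert]
      constructor
      · rintro (h | ⟨h, -⟩ | ⟨-, rfl⟩)
        · exact Or.inr h
        · exact absurd h huv.symm
        · exact Or.inl rfl
      · rintro (rfl | h) <;> tauto
    rw [hN, card_insert_of_notMem
        (by simp only [mem_neighborFinset]; exact fun h => hnadj h.symm),
      card_neighborFinset_eq_degree, hv]
  have hdx : ∀ x, x ≠ u → x ≠ v → (addEdge G u v).degree x = G.degree x := by
    intro x hxu hxv
    rw [← card_neighborFinset_eq_degree, ← card_neighborFinset_eq_degree]
    congr 1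
    ext w
    simp only [mem_neighborFinset, hadj]
    constructor
    · rintro (h | ⟨rfl, rfl⟩ | ⟨rfl, rfl⟩)
      · exact h
      · exact absurd rfl hxu
      · exact absurd rfl hxv
    · exact fun h => Or.inl h
  -- edge sets
  have hE : (addEdge G u v).edgeFinset = insert s(u, v) G.edgeFinset := by
    ext e
    induction e using Sym2.ind with
    | _ x y =>
      simp only [mem_edgeFinset, mem_edgeSet, hadj, mem_insert, Sym2.eq_iff]
      tauto
  -- abbreviations
  set F : Sym2 V → ℝ := Sym2.lift
    ⟨fun x y => Real.sqrt ((G.degree x : ℝ)^2 + (G.degree y : ℝ)^2) /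
      min (G.degree x : ℝ) (G.degree y : ℝ),
     fun x y => by simp [add_comm, min_comm]⟩ with hFdef
  set F' : Sym2 V → ℝ := Sym2.lift
    ⟨fun x y => Real.sqrt (((addEdge G u v).degree x : ℝ)^2 + ((addEdge G u v).degree y : ℝ)^2) /
      min ((addEdge G u v).degree x : ℝ) ((addEdge G u v).degree y : ℝ),
     fun x y => by simp [add_comm, min_comm]⟩ with hF'def
  have hsuv_not : s(u, v) ∉ G.edgeFinset := by
    simp [mem_edgeFinset, mem_edgeSet, hnadj]
  have hHSO' : HSO (addEdge G u v) = F' s(u, v) + ∑ e ∈ G.edgeFinset, F' e := by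
    rw [HSO_eq, hE, sum_insert hsuv_not]
  have hHSO : HSO G = ∑ e ∈ G.edgeFinset, F e := HSO_eq G
  -- value of the new edge
  have hnew : F' s(u, v) = Real.sqrt 2 := by
    rw [hF'def, Sym2.lift_mk]
    simp only [hdu, hdv]
    push_cast
    rw [min_self, show ((δ:ℝ)+1)^2 + ((δ:ℝ)+1)^2 = 2*((δ:ℝ)+1)^2 by ring,
      Real.sqrt_mul (by norm_num) _, Real.sqrt_sq (by positivity)]
    field_simp
  -- common facts
  have hδR : (1:ℝ) ≤ (δ:ℝ) := by exact_mod_cast hδ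
  -- partition of the old edge set
  have hdisjUV : ∀ e ∈ G.edgeFinset, u ∈ e → v ∈ e → False := by
    intro e he h1 h2
    have heq : e = s(u, v) := (Sym2.mem_and_mem_iff huv).1 ⟨h1, h2⟩
    rw [heq] at he
    exact hsuv_not he
  have hsplit : ∀ f : Sym2 V → ℝ, ∑ e ∈ G.edgeFinset, f e =
      (∑ e ∈ G.edgeFinset.filter (fun e => u ∈ e), f e)
      + (∑ e ∈ G.edgeFinset.filter (fun e => v ∈ e), f e)
      + (∑ e ∈ G.edgeFinset.filter (fun e => u ∉ e ∧ v ∉ e), f e) := by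
    intro f
    rw [← Finset.sum_filter_add_sum_filter_not G.edgeFinset (fun e => u ∈ e) f]
    have h2 : G.edgeFinset.filter (fun e => u ∉ e) =
        (G.edgeFinset.filter (fun e => v ∈ e)) ∪
        (G.edgeFinset.filter (fun e => u ∉ e ∧ v ∉ e)) := by
      ext e
      simp only [mem_filter, mem_union]
      constructor
      · rintro ⟨he, hue⟩
        by_cases hve : v ∈ e
        · exact Or.inl ⟨he, hve⟩
        · exact Or.inr ⟨he, hue, hve⟩
      · rintro (⟨he, hve⟩ | ⟨he, hue, -⟩)
        · exact ⟨he, fun hue => hdisjUV e he hue hve⟩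
        · exact ⟨he, hue⟩
    have hd : Disjoint (G.edgeFinset.filter (fun e => v ∈ e))
        (G.edgeFinset.filter (fun e => u ∉ e ∧ v ∉ e)) := by
      rw [Finset.disjoint_left]
      intro e he1 he2
      rw [mem_filter] at he1 he2
      exact he2.2.2 he1.2
    rw [h2, Finset.sum_union hd]
    ring
  -- cardinalities
  have hcardu : (G.edgeFinset.filter (fun e => u ∈ e)).card = δ := by
    have h : G.edgeFinset.filter (fun e => u ∈ e) = G.incidenceFinset u := by
      ext e
      simp [mem_incidenceFinset, incidenceSet, mem_edgeFinset]
    rw [h, card_incidenceFinset_eq_degree, hu]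
  have hcardv : (G.edgeFinset.filter (fun e => v ∈ e)).card = δ := by
    have h : G.edgeFinset.filter (fun e => v ∈ e) = G.incidenceFinset v := by
      ext e
      simp [mem_incidenceFinset, incidenceSet, mem_edgeFinset]
    rw [h, card_incidenceFinset_eq_degree, hv]
  -- per-edge strict bounds
  have hbound : ∀ z : V, G.degree z = δ → (∀ w, G.Adj z w → δ < G.degree w) →
      (addEdge G u v).degree z = δ + 1 →
      (∀ w, G.Adj z w → w ≠ u ∧ w ≠ v) →
      ∀ e ∈ G.edgeFinset.filter (fun e => z ∈ e),
      F' e < F e - Real.sqrt 2 / (2*(δ:ℝ)) := by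
    intro z hz hNz hz' hside e he
    rw [mem_filter] at he
    obtain ⟨he, hze⟩ := he
    obtain ⟨w, rfl⟩ := Sym2.mem_iff_exists.1 hze
    rw [mem_edgeFinset, mem_edgeSet] at he
    obtain ⟨hwu, hwv⟩ := hside w he
    have hdw : δ < G.degree w := hNz w he
    rw [hFdef, hF'def, Sym2.lift_mk, Sym2.lift_mk]
    simp only [hz', hz, hdx w hwu hwv]
    have hdwR : (δ:ℝ) + 1 ≤ (G.degree w : ℝ) := by exact_mod_cast hdw
    push_cast
    rw [min_eq_left hdwR, min_eq_left (by linarith)]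
    have hpe := per_edge (δ:ℝ) (G.degree w : ℝ) hδR hdwR
    linarith
  -- sum bounds on the two incidence sets
  have hδne : ((δ:ℝ)) ≠ 0 := by linarith
  have hc : (δ : ℕ) • (Real.sqrt 2/(2*(δ:ℝ))) = Real.sqrt 2/2 := by
    rw [nsmul_eq_mul]
    field_simp
  have hsumu : ∑ e ∈ G.edgeFinset.filter (fun e => u ∈ e), F' e <
      (∑ e ∈ G.edgeFinset.filter (fun e => u ∈ e), F e) - Real.sqrt 2/2 := by
    have hne : (G.edgeFinset.filter (fun e => u ∈ e)).Nonempty := by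
      rw [← Finset.card_pos, hcardu]; omega
    have h := Finset.sum_lt_sum_of_nonempty hne
      (hbound u hu hNu hdu (fun w hw => ⟨fun h => (G.ne_of_adj hw) h.symm,
        fun h => hnadj (h ▸ hw)⟩))
    rw [Finset.sum_sub_distrib, Finset.sum_const, hcardu, hc] at h
    exact h
  have hsumv : ∑ e ∈ G.edgeFinset.filter (fun e => v ∈ e), F' e <
      (∑ e ∈ G.edgeFinset.filter (fun e => v ∈ e), F e) - Real.sqrt 2/2 := by
    have hne : (G.edgeFinset.filter (fun e => v ∈ e)).Nonempty := by
      rw [← Finset.card_pos, hcardv]; omega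
    have h := Finset.sum_lt_sum_of_nonempty hne
      (hbound v hv hNv hdv (fun w hw => ⟨fun h => hnadj (h ▸ hw).symm,
        fun h => (G.ne_of_adj hw) h.symm⟩))
    rw [Finset.sum_sub_distrib, Finset.sum_const, hcardv, hc] at h
    exact h
  -- untouched edges
  have hS0 : ∑ e ∈ G.edgeFinset.filter (fun e => u ∉ e ∧ v ∉ e), F' e =
      ∑ e ∈ G.edgeFinset.filter (fun e => u ∉ e ∧ v ∉ e), F e := by
    refine Finset.sum_congr rfl ?_
    intro e he
    induction e using Sym2.ind with
    | _ x y =>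
      rw [mem_filter, Sym2.mem_iff, Sym2.mem_iff] at he
      obtain ⟨-, hux, hvx⟩ := he
      push_neg at hux hvx
      rw [hFdef, hF'def, Sym2.lift_mk, Sym2.lift_mk]
      simp only [hdx x (fun h => hux.1 h.symm) (fun h => hvx.1 h.symm),
        hdx y (fun h => hux.2 h.symm) (fun h => hvx.2 h.symm)]
  -- conclude
  rw [hHSO', hHSO, hnew, hsplit F, hsplit F', hS0]
  linarith
end

section
/- If G is a connected graph of order n ≥ 3, then √((n−1)² + 1) ≤ cDSO(G) ≤ n(n−1)/√2, with left equality if and only if G ≅ S_n and right equality if and only if G ≅ K_n. -/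
open SimpleGraph Finset Real

/-!
Every edge `uv` contributes `√(1 + r²)`, where `r = min(d u, d v) / max(d u, d v)` lies in
`[1/(n-1), 1]`, and a connected graph has between `n - 1` and `n(n-1)/2` edges; multiplying the
extreme edge counts by the extreme contributions gives both bounds. Equality on the left forces
every edge to join a vertex of degree `n - 1` to a leaf, so `G` is a star; equality on the right
forces `n(n-1)/2` edges, so `G` is complete.
-/

noncomputable def cDSOWeight (a b : ℝ) : ℝ := √(a ^ 2 + b ^ 2) / max a b

lemma cDSOWeight_comm (a b : ℝ) : cDSOWeight a b = cDSOWeight b a := by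
  rw [cDSOWeight, cDSOWeight, add_comm, max_comm]

lemma cDSOWeight_eq_sqrt_one_add_sq {a b : ℝ} (ha : 0 < a) (hb : 0 < b) :
    cDSOWeight a b = √(1 + (min a b / max a b) ^ 2) := by
  wlog hab : a ≤ b generalizing a b
  · rw [cDSOWeight_comm, min_comm, max_comm]
    exact this hb ha (le_of_not_ge hab)
  rw [cDSOWeight, min_eq_left hab, max_eq_right hab, div_pow, one_add_div (by positivity),
    sqrt_div' _ (sq_nonneg b), sqrt_sq hb.le, add_comm]

lemma cDSOWeight_self {a : ℝ} (ha : 0 < a) : cDSOWeight a a = √2 := by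
  rw [cDSOWeight_eq_sqrt_one_add_sq ha ha, min_self, max_self, div_self ha.ne']
  norm_num

lemma cDSOWeight_le_sqrt_two {a b : ℝ} (ha : 0 < a) (hb : 0 < b) : cDSOWeight a b ≤ √2 := by
  rw [cDSOWeight_eq_sqrt_one_add_sq ha hb]
  have hratio : (min a b / max a b) ^ 2 ≤ 1 :=
    pow_le_one₀ (by positivity) (div_le_one_of_le₀ min_le_max (by positivity))
  exact sqrt_le_sqrt (by linarith)

lemma cDSOWeight_one_left {N : ℝ} (hN : 1 ≤ N) : cDSOWeight 1 N = √(1 + (1 / N) ^ 2) := by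
  rw [cDSOWeight_eq_sqrt_one_add_sq one_pos (by linarith), min_eq_left hN, max_eq_right hN]

lemma sqrt_one_add_inv_sq_le_cDSOWeight {a b N : ℝ} (ha : 1 ≤ a) (hb : 1 ≤ b) (haN : a ≤ N)
    (hbN : b ≤ N) : √(1 + (1 / N) ^ 2) ≤ cDSOWeight a b := by
  rw [cDSOWeight_eq_sqrt_one_add_sq (by linarith) (by linarith)]
  have hratio : 1 / N ≤ min a b / max a b :=
    div_le_div₀ (by positivity) (le_min ha hb) (by positivity) (max_le haN hbN)
  have hN : 0 < N := by linarith
  gcongr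

lemma min_eq_one_and_max_eq_of_cDSOWeight_eq {a b N : ℝ} (ha : 1 ≤ a) (hb : 1 ≤ b)
    (haN : a ≤ N) (hbN : b ≤ N) (h : cDSOWeight a b = √(1 + (1 / N) ^ 2)) :
    min a b = 1 ∧ max a b = N := by
  have hN : 0 < N := by linarith
  rw [cDSOWeight_eq_sqrt_one_add_sq (by linarith) (by linarith),
    sqrt_inj (by positivity) (by positivity), add_right_inj,
    pow_left_inj₀ (by positivity) (by positivity) two_ne_zero,
    div_eq_div_iff (by positivity) hN.ne'] at h
  have hmin : 1 ≤ min a b := le_min ha hb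
  have hmax : max a b ≤ N := max_le haN hbN
  constructor <;> nlinarith

lemma sqrt_sq_add_one_eq_mul {N : ℝ} (hN : 0 < N) :
    √(N ^ 2 + 1) = N * √(1 + (1 / N) ^ 2) := by
  rw [← sqrt_sq hN.le, ← sqrt_mul (sq_nonneg N), sqrt_sq hN.le]
  congr 1
  field_simp

lemma choose_two_mul_sqrt_two (n : ℕ) : (n.choose 2 : ℝ) * √2 = n * (n - 1) / √2 := by
  rw [Nat.cast_choose_two, eq_div_iff (by positivity), mul_assoc, mul_self_sqrt zero_le_two]
  ring

namespace SimpleGraph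

variable {V : Type*}

lemma completeBipartiteGraph_adj_iff_starGraph_adj {β : Type*} (e : V ≃ Fin 1 ⊕ β) {w : V}
    (hw : e w = .inl 0) (a b : V) :
    (completeBipartiteGraph (Fin 1) β).Adj (e a) (e b) ↔ (starGraph w).Adj a b := by
  have hleft : ∀ x, (e x).isLeft ↔ x = w := fun x => by
    rw [← e.injective.eq_iff, hw]
    rcases e x with z | z
    · simp [Subsingleton.elim z 0]
    · simp
  simp only [completeBipartiteGraph_adj, ← Sum.not_isLeft, hleft, starGraph_adj]
  grind

variable [Fintype V]

section

variable (G : SimpleGraph V) [DecidableRel G.Adj]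

noncomputable def cDSOEdgeWeight : Sym2 V → ℝ :=
  Sym2.lift ⟨fun u v => cDSOWeight (G.degree u) (G.degree v), fun _ _ => cDSOWeight_comm _ _⟩

lemma cDSO_eq_sum_cDSOEdgeWeight : cDSO G = ∑ e ∈ G.edgeFinset, G.cDSOEdgeWeight e := by
  simp only [cDSO, cDSOEdgeWeight, cDSOWeight]
  congr!

lemma forall_cDSOEdgeWeight {P : ℝ → Prop}
    (h : ∀ u v, G.Adj u v → P (cDSOWeight (G.degree u) (G.degree v))) :
    ∀ e ∈ G.edgeFinset, P (G.cDSOEdgeWeight e) := by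
  intro e he
  induction e using Sym2.ind with
  | _ u v => exact h u v (G.mem_edgeFinset.1 he)

lemma cDSO_le_card_edgeFinset_mul {C : ℝ}
    (h : ∀ u v, G.Adj u v → cDSOWeight (G.degree u) (G.degree v) ≤ C) :
    cDSO G ≤ #G.edgeFinset * C := by
  rw [cDSO_eq_sum_cDSOEdgeWeight, ← nsmul_eq_mul]
  exact sum_le_card_nsmul _ _ _ (G.forall_cDSOEdgeWeight (P := (· ≤ C)) h)

lemma card_edgeFinset_mul_le_cDSO {C : ℝ}
    (h : ∀ u v, G.Adj u v → C ≤ cDSOWeight (G.degree u) (G.degree v)) :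
    #G.edgeFinset * C ≤ cDSO G := by
  rw [cDSO_eq_sum_cDSOEdgeWeight, ← nsmul_eq_mul]
  exact card_nsmul_le_sum _ _ _ (G.forall_cDSOEdgeWeight (P := (C ≤ ·)) h)

lemma cDSO_eq_card_edgeFinset_mul {C : ℝ}
    (h : ∀ u v, G.Adj u v → cDSOWeight (G.degree u) (G.degree v) = C) :
    cDSO G = #G.edgeFinset * C :=
  le_antisymm (G.cDSO_le_card_edgeFinset_mul fun u v huv => (h u v huv).le)
    (G.card_edgeFinset_mul_le_cDSO fun u v huv => (h u v huv).ge)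

lemma cDSOWeight_eq_of_cDSO_eq_card_edgeFinset_mul {C : ℝ}
    (h : ∀ u v, G.Adj u v → C ≤ cDSOWeight (G.degree u) (G.degree v))
    (heq : cDSO G = #G.edgeFinset * C) {u v : V} (huv : G.Adj u v) :
    cDSOWeight (G.degree u) (G.degree v) = C := by
  rw [cDSO_eq_sum_cDSOEdgeWeight, ← nsmul_eq_mul, ← sum_const] at heq
  exact ((sum_eq_sum_iff_of_le (G.forall_cDSOEdgeWeight (P := (C ≤ ·)) h)).1 heq.symm _
    (G.mem_edgeFinset.2 (G.mem_edgeSet.2 huv))).symm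

lemma one_le_degree_of_adj {u v : V} (huv : G.Adj u v) : (1 : ℝ) ≤ G.degree u := by
  exact_mod_cast huv.degree_pos_left

lemma degree_le_card_sub_one (u : V) : (G.degree u : ℝ) ≤ Fintype.card V - 1 := by
  rw [le_sub_iff_add_le]
  exact_mod_cast G.degree_lt_card_verts u

lemma card_sub_one_le_card_edgeFinset (hconn : G.Connected) :
    (Fintype.card V : ℝ) - 1 ≤ #G.edgeFinset := by
  have := hconn.card_vert_le_card_edgeSet_add_one
  rw [Nat.card_eq_fintype_card, Nat.card_eq_fintype_card, ← edgeFinset_card] at this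
  rw [sub_le_iff_le_add]
  exact_mod_cast this

lemma sqrt_one_add_inv_sq_le_cDSOWeight_of_adj {u v : V} (huv : G.Adj u v) :
    √(1 + (1 / ((Fintype.card V : ℝ) - 1)) ^ 2) ≤ cDSOWeight (G.degree u) (G.degree v) :=
  sqrt_one_add_inv_sq_le_cDSOWeight (G.one_le_degree_of_adj huv)
    (G.one_le_degree_of_adj huv.symm) (G.degree_le_card_sub_one u) (G.degree_le_card_sub_one v)

lemma cDSO_le_card_edgeFinset_mul_sqrt_two : cDSO G ≤ #G.edgeFinset * √2 :=
  G.cDSO_le_card_edgeFinset_mul fun u v huv =>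
    cDSOWeight_le_sqrt_two (by linarith [G.one_le_degree_of_adj huv])
      (by linarith [G.one_le_degree_of_adj huv.symm])

lemma eq_top_of_card_choose_two_le (h : (Fintype.card V).choose 2 ≤ #G.edgeFinset) : G = ⊤ := by
  classical
  exact edgeFinset_inj.1 <| eq_of_subset_of_card_le (edgeFinset_subset_edgeFinset.2 le_top)
    (by rwa [card_edgeFinset_top_eq_card_choose_two])

lemma exists_eq_starGraph_of_forall_adj (hV : 3 ≤ Fintype.card V) (hconn : G.Connected)
    (h : ∀ u v, G.Adj u v → min (G.degree u : ℝ) (G.degree v) = 1 ∧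
      max (G.degree u : ℝ) (G.degree v) = Fintype.card V - 1) :
    ∃ w, G = starGraph w := by
  have hV' : (3 : ℝ) ≤ Fintype.card V := by exact_mod_cast hV
  have : Nontrivial V := Fintype.one_lt_card_iff_nontrivial.1 (by omega)
  obtain ⟨u, v, huv⟩ : ∃ u v, G.Adj u v :=
    ⟨_, hconn.preconnected.exists_adj_of_nontrivial (Classical.arbitrary V)⟩
  obtain ⟨w, hw⟩ : ∃ w, (G.degree w : ℝ) = Fintype.card V - 1 := by
    rcases max_choice (G.degree u : ℝ) (G.degree v) with hmax | hmax
    · exact ⟨u, hmax ▸ (h u v huv).2⟩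
    · exact ⟨v, hmax ▸ (h u v huv).2⟩
  have huniv : G.IsUniversal w := by
    have hdeg : (G.degree w : ℝ) = (Fintype.card V - 1 : ℕ) := by
      rw [hw, Nat.cast_sub (by omega), Nat.cast_one]
    exact (G.degree_eq_card_sub_one w).1 (by exact_mod_cast hdeg)
  have hleaf : ∀ a, G.Adj w a → G.degree a = 1 := by
    intro a ha
    have hmin := (h w a ha).1
    rcases min_choice (G.degree w : ℝ) (G.degree a) with hm | hm <;> rw [hm] at hmin
    · linarith
    · exact_mod_cast hmin
  refine ⟨w, ?_⟩
  ext a b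
  rw [starGraph_adj]
  refine ⟨fun hab => ⟨hab.ne, ?_⟩, ?_⟩
  · by_contra! hne
    obtain ⟨x, -, hx⟩ := degree_eq_one_iff_existsUnique_adj.1 (hleaf a (huniv hne.1.symm))
    exact hne.2 ((hx b hab).trans (hx w (huniv hne.1.symm).symm).symm)
  · rintro ⟨hab, rfl | rfl⟩
    · exact huniv hab
    · exact (huniv hab.symm).symm

end

lemma cDSO_starGraph (hV : 2 ≤ Fintype.card V) (w : V) :
    cDSO (starGraph w) = √(((Fintype.card V : ℝ) - 1) ^ 2 + 1) := by
  classical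
  have hN : (1 : ℝ) ≤ Fintype.card V - 1 := by
    have : (2 : ℝ) ≤ Fintype.card V := by exact_mod_cast hV
    linarith
  have hcenter : ((starGraph w).degree w : ℝ) = Fintype.card V - 1 := by
    rw [degree_starGraph_center, Nat.cast_sub (by omega), Nat.cast_one]
  have hleaf : ∀ v, v ≠ w → ((starGraph w).degree v : ℝ) = 1 := fun v hv => by
    rw [degree_starGraph_of_ne_center hv, Nat.cast_one]
  have hweight : ∀ u v, (starGraph w).Adj u v →
      cDSOWeight ((starGraph w).degree u) ((starGraph w).degree v) =
        √(1 + (1 / ((Fintype.card V : ℝ) - 1)) ^ 2) := by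
    rintro u v ⟨huv, rfl | rfl⟩
    · rw [hcenter, hleaf v huv.symm, cDSOWeight_comm, cDSOWeight_one_left hN]
    · rw [hleaf u huv, hcenter, cDSOWeight_one_left hN]
  have hcard : (#(starGraph w).edgeFinset : ℝ) = Fintype.card V - 1 := by
    rw [eq_sub_iff_add_eq]
    exact_mod_cast (isTree_starGraph w).card_edgeFinset
  rw [cDSO_eq_card_edgeFinset_mul _ hweight, hcard, sqrt_sq_add_one_eq_mul (by linarith)]

lemma cDSO_top : cDSO (⊤ : SimpleGraph V) = Fintype.card V * (Fintype.card V - 1) / √2 := by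
  classical
  have hdeg : ∀ v, (⊤ : SimpleGraph V).degree v = Fintype.card V - 1 := fun v =>
    (degree_eq_card_sub_one _ v).2 fun _ h => h
  rw [← choose_two_mul_sqrt_two, ← card_edgeFinset_top_eq_card_choose_two]
  refine cDSO_eq_card_edgeFinset_mul _ fun u v huv => ?_
  rw [hdeg u, ← hdeg v]
  exact cDSOWeight_self (by linarith [one_le_degree_of_adj _ huv.symm])

variable (G : SimpleGraph V)

lemma sqrt_le_cDSO (hV : 2 ≤ Fintype.card V) (hconn : G.Connected) :
    √(((Fintype.card V : ℝ) - 1) ^ 2 + 1) ≤ cDSO G := by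
  classical
  have hN : (0 : ℝ) < Fintype.card V - 1 := by
    have : (2 : ℝ) ≤ Fintype.card V := by exact_mod_cast hV
    linarith
  rw [sqrt_sq_add_one_eq_mul hN]
  calc (Fintype.card V - 1) * √(1 + (1 / ((Fintype.card V : ℝ) - 1)) ^ 2)
      ≤ #G.edgeFinset * √(1 + (1 / ((Fintype.card V : ℝ) - 1)) ^ 2) := by
        gcongr
        exact G.card_sub_one_le_card_edgeFinset hconn
    _ ≤ cDSO G :=
        G.card_edgeFinset_mul_le_cDSO fun _ _ => G.sqrt_one_add_inv_sq_le_cDSOWeight_of_adj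

lemma cDSO_eq_sqrt_iff_exists_eq_starGraph (hV : 3 ≤ Fintype.card V) (hconn : G.Connected) :
    cDSO G = √(((Fintype.card V : ℝ) - 1) ^ 2 + 1) ↔ ∃ w, G = starGraph w := by
  classical
  refine ⟨fun heq => G.exists_eq_starGraph_of_forall_adj hV hconn fun u v huv => ?_, ?_⟩
  · have hN : (0 : ℝ) < Fintype.card V - 1 := by
      have : (3 : ℝ) ≤ Fintype.card V := by exact_mod_cast hV
      linarith
    have hlow :=
      G.card_edgeFinset_mul_le_cDSO fun _ _ => G.sqrt_one_add_inv_sq_le_cDSOWeight_of_adj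
    have htight : cDSO G = #G.edgeFinset * √(1 + (1 / ((Fintype.card V : ℝ) - 1)) ^ 2) := by
      rw [heq, sqrt_sq_add_one_eq_mul hN] at hlow ⊢
      exact le_antisymm (mul_le_mul_of_nonneg_right (G.card_sub_one_le_card_edgeFinset hconn)
        (sqrt_nonneg _)) hlow
    exact min_eq_one_and_max_eq_of_cDSOWeight_eq (G.one_le_degree_of_adj huv)
      (G.one_le_degree_of_adj huv.symm) (G.degree_le_card_sub_one u) (G.degree_le_card_sub_one v)
      (G.cDSOWeight_eq_of_cDSO_eq_card_edgeFinset_mul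
        (fun _ _ => G.sqrt_one_add_inv_sq_le_cDSOWeight_of_adj) htight huv)
  · rintro ⟨w, rfl⟩
    exact cDSO_starGraph (by omega) w

lemma cDSO_le : cDSO G ≤ Fintype.card V * (Fintype.card V - 1) / √2 := by
  classical
  rw [← choose_two_mul_sqrt_two]
  exact G.cDSO_le_card_edgeFinset_mul_sqrt_two.trans <| mul_le_mul_of_nonneg_right
    (by exact_mod_cast G.card_edgeFinset_le_card_choose_two) (sqrt_nonneg 2)

lemma cDSO_eq_iff_eq_top : cDSO G = Fintype.card V * (Fintype.card V - 1) / √2 ↔ G = ⊤ := by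
  classical
  refine ⟨fun heq => G.eq_top_of_card_choose_two_le ?_, by rintro rfl; exact cDSO_top⟩
  have := G.cDSO_le_card_edgeFinset_mul_sqrt_two
  rw [heq, ← choose_two_mul_sqrt_two] at this
  exact_mod_cast le_of_mul_le_mul_right this (sqrt_pos.2 two_pos)

lemma nonempty_iso_completeBipartiteGraph_iff :
    Nonempty (G ≃g completeBipartiteGraph (Fin 1) (Fin (Fintype.card V - 1))) ↔
      ∃ w, G = starGraph w := by
  constructor
  · rintro ⟨F⟩
    refine ⟨F.symm (.inl 0), ?_⟩
    ext a b
    rw [← F.map_adj_iff]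
    exact completeBipartiteGraph_adj_iff_starGraph_adj F.toEquiv (F.apply_symm_apply _) a b
  · rintro ⟨w, rfl⟩
    have hcard : Fintype.card V = Fintype.card (Fin 1 ⊕ Fin (Fintype.card V - 1)) := by
      have := Fintype.card_pos_iff.2 ⟨w⟩
      simp only [Fintype.card_sum, Fintype.card_fin]
      omega
    let e₀ := Fintype.equivOfCardEq hcard
    let e := e₀.trans (Equiv.swap (e₀ w) (.inl 0))
    have hw : e w = .inl 0 := Equiv.swap_apply_left _ _
    exact ⟨⟨e, completeBipartiteGraph_adj_iff_starGraph_adj e hw _ _⟩⟩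

lemma nonempty_iso_top_iff :
    Nonempty (G ≃g (⊤ : SimpleGraph (Fin (Fintype.card V)))) ↔ G = ⊤ := by
  constructor
  · rintro ⟨F⟩
    ext a b
    rw [← F.map_adj_iff, top_adj, top_adj, F.injective.ne_iff]
  · rintro rfl
    exact ⟨Iso.completeGraph (Fintype.equivFin V)⟩

end SimpleGraph

theorem stmt13_general {V : Type*} [Fintype V] (G : SimpleGraph V)
    (n : ℕ) (hn : n = Fintype.card V) (hn3 : 3 ≤ n) (hconn : G.Connected) :
    Real.sqrt (((n : ℝ) - 1) ^ 2 + 1) ≤ cDSO G ∧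
    cDSO G ≤ (n : ℝ) * ((n : ℝ) - 1) / Real.sqrt 2 ∧
    (cDSO G = Real.sqrt (((n : ℝ) - 1) ^ 2 + 1) ↔
      Nonempty (G ≃g completeBipartiteGraph (Fin 1) (Fin (n - 1)))) ∧
    (cDSO G = (n : ℝ) * ((n : ℝ) - 1) / Real.sqrt 2 ↔
      Nonempty (G ≃g (⊤ : SimpleGraph (Fin n)))) := by
  subst hn
  exact ⟨G.sqrt_le_cDSO (by omega) hconn, G.cDSO_le,
    (G.cDSO_eq_sqrt_iff_exists_eq_starGraph hn3 hconn).trans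
      G.nonempty_iso_completeBipartiteGraph_iff.symm,
    G.cDSO_eq_iff_eq_top.trans G.nonempty_iso_top_iff.symm⟩

theorem stmt13 {V : Type*} [Fintype V] (G : SimpleGraph V) [DecidableRel G.Adj]
    (n : ℕ) (hn : n = Fintype.card V) (hn3 : 3 ≤ n) (hconn : G.Connected) :
    Real.sqrt (((n : ℝ) - 1) ^ 2 + 1) ≤ cDSO G ∧
    cDSO G ≤ (n : ℝ) * ((n : ℝ) - 1) / Real.sqrt 2 ∧
    (cDSO G = Real.sqrt (((n : ℝ) - 1) ^ 2 + 1) ↔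
      Nonempty (G ≃g completeBipartiteGraph (Fin 1) (Fin (n - 1)))) ∧
    (cDSO G = (n : ℝ) * ((n : ℝ) - 1) / Real.sqrt 2 ↔
      Nonempty (G ≃g (⊤ : SimpleGraph (Fin n)))) :=
  stmt13_general G n hn hn3 hconn
end
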